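/- arXiv:1310.7311 — 4 statements merged into one kernel-verified Lean document; each statement's English description precedes it below -/
import Mathlib

section
/- Let N₁₁, N₁₂, N₂, M₂ be positive real numbers with N₁₁ + N₁₂ > M₂ ≥ max{N₁₁, N₁₂}, and let d₁₁, d₁₂, d₂ be nonnegative real numbers. Then there exists a real number g ≥ 0 satisfying the genie system: d₁₁ ≤ N₁₁, d₁₂ ≤ N₁₂, d₂ ≤ N₂, d₁₁ + d₁₂ + d₂ ≤ M₂ + g, g ≤ d₁₁, g ≤ d₁₂, and g ≤ N₁₁ + N₁₂ − M₂, if and only if: d₁₁ ≤ N₁₁, d₁₂ ≤ N₁₂, d₂ ≤ N₂, d₁₁ + d₂ ≤ M₂, d₁₂ + d₂ ≤ M₂, and d₁₁ + d₁₂ + d₂ ≤ N₁₁ + N₁₂. -/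
/-- In the two-cell MIMO-IBC example (cell 1 with two users having
`N₁₁`, `N₁₂` antennas, cell 2 with one user having `N₂` antennas, BS₂ with `M₂`
antennas, `N₁₁ + N₁₂ > M₂ ≥ max{N₁₁, N₁₂}`), a genie dimension `g ≥ 0` satisfying
the genie system exists iff the DoF outer bound system holds. -/
theorem genie_system_iff_dof_outer_bound
    (N11 N12 N2 M2 : ℝ) (hN11 : 0 < N11) (hN12 : 0 < N12) (hN2 : 0 < N2)
    (hM2 : 0 < M2) (hsum : N11 + N12 > M2) (hmax : M2 ≥ max N11 N12)
    (d11 d12 d2 : ℝ) (hd11 : 0 ≤ d11) (hd12 : 0 ≤ d12) (hd2 : 0 ≤ d2) :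
    (∃ g : ℝ, 0 ≤ g ∧ d11 ≤ N11 ∧ d12 ≤ N12 ∧ d2 ≤ N2 ∧
        d11 + d12 + d2 ≤ M2 + g ∧ g ≤ d11 ∧ g ≤ d12 ∧ g ≤ N11 + N12 - M2) ↔
    (d11 ≤ N11 ∧ d12 ≤ N12 ∧ d2 ≤ N2 ∧ d11 + d2 ≤ M2 ∧ d12 + d2 ≤ M2 ∧
        d11 + d12 + d2 ≤ N11 + N12) := by
  constructor
  · rintro ⟨g, hg0, h1, h2, h3, h4, h5, h6, h7⟩
    refine ⟨h1, h2, h3, by linarith, by linarith, by linarith⟩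
  · rintro ⟨h1, h2, h3, h4, h5, h6⟩
    refine ⟨max 0 (d11 + d12 + d2 - M2), le_max_left _ _, h1, h2, h3, ?_, ?_, ?_, ?_⟩
    · rcases le_total (d11 + d12 + d2 - M2) 0 with h | h
      · simp [max_eq_left h]; linarith
      · rw [max_eq_right h]; linarith
    · exact max_le hd11 (by linarith)
    · exact max_le hd12 (by linarith)
    · exact max_le (by linarith) (by linarith)
end

section
/- Let k ≥ 4 be a real number. Then the sequence (C_n^A(k))_{n≥1} is well-defined for all n (in particular C_n^A(k) > 0 so the recursion never divides by zero), is strictly decreasing, satisfies C_n^A(k) > (k + √(k² − 4k))/2 for every n ≥ 1, and converges to (k + √(k² − 4k))/2 as n → ∞. -/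
/-- `CA k n` is `C_n^A(k)`: `C_1^A(k) = k`, `C_{n+1}^A(k) = k − k/C_n^A(k)`
(the value at `n = 0` is junk). -/
noncomputable def CA (k : ℝ) : ℕ → ℝ
  | 0 => 0
  | 1 => k
  | (n + 2) => k - k / CA k (n + 1)

/-- `CB k n` is `C_n^B(k)`: `C_1^B(k) = 1`, `C_{n+1}^B(k) = k/(k − C_n^B(k))`
(the value at `n = 0` is junk). -/
noncomputable def CB (k : ℝ) : ℕ → ℝ
  | 0 => 0
  | 1 => 1
  | (n + 2) => k / (k - CB k (n + 1))

lemma CA_rec (k : ℝ) (n : ℕ) (hn : 1 ≤ n) : CA k (n + 1) = k - k / CA k n := by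
  obtain ⟨j, rfl⟩ := Nat.exists_eq_succ_of_ne_zero (by omega : n ≠ 0)
  simp [CA]

/-- For `k ≥ 4`, the sequence `C_n^A(k)` is well-defined (positive, so
the recursion never divides by zero), strictly decreasing, stays strictly above
`(k + √(k² − 4k))/2`, and converges to `(k + √(k² − 4k))/2`. -/
theorem CA_pos_strictAnti_gt_limit_tendsto (k : ℝ) (hk : 4 ≤ k) :
    (∀ n : ℕ, 1 ≤ n → 0 < CA k n) ∧
    (∀ n : ℕ, 1 ≤ n → CA k (n + 1) < CA k n) ∧
    (∀ n : ℕ, 1 ≤ n → (k + Real.sqrt (k ^ 2 - 4 * k)) / 2 < CA k n) ∧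
    Filter.Tendsto (fun n => CA k n) Filter.atTop
      (nhds ((k + Real.sqrt (k ^ 2 - 4 * k)) / 2)) := by
  have hk0 : (0:ℝ) < k := by linarith
  set s := Real.sqrt (k ^ 2 - 4 * k) with hs
  have hs2 : s ^ 2 = k ^ 2 - 4 * k := Real.sq_sqrt (by nlinarith)
  have hs0 : 0 ≤ s := Real.sqrt_nonneg _
  have hsk : s < k := by nlinarith
  set L := (k + s) / 2 with hL
  have hL2 : L ^ 2 - k * L + k = 0 := by
    have h2 : (2 * L) = k + s := by rw [hL]; ring
    nlinarith
  have hLpos : 0 < L := by positivity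
  have h2L : k ≤ 2 * L := by rw [hL]; linarith
  have hLk : L < k := by rw [hL]; linarith
  -- key invariant
  have key : ∀ n : ℕ, 1 ≤ n → L < CA k n := by
    intro n hn
    induction n with
    | zero => omega
    | succ m ih =>
      rcases Nat.lt_or_ge 1 (m + 1) with h1 | h1
      · have hm : 1 ≤ m := by omega
        have hx := ih hm
        have hx0 : 0 < CA k m := hLpos.trans hx
        rw [CA_rec k m hm]
        have hdiv : k / CA k m < k - L := by
          rw [div_lt_iff₀ hx0]
          nlinarith
        linarith
      · have : m + 1 = 1 := by omega
        rw [this]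
        simpa [CA] using hLk
  have pos : ∀ n : ℕ, 1 ≤ n → 0 < CA k n := fun n hn => hLpos.trans (key n hn)
  have dec : ∀ n : ℕ, 1 ≤ n → CA k (n + 1) < CA k n := by
    intro n hn
    have hx := key n hn
    have hx0 : 0 < CA k n := hLpos.trans hx
    have h1 : 0 < CA k n ^ 2 - k * CA k n + k := by
      nlinarith [mul_pos (sub_pos.mpr hx) (show 0 < CA k n + L - k by linarith)]
    have h2 : 0 < CA k n - (k - k / CA k n) := by
      rw [show CA k n - (k - k / CA k n) = (CA k n ^ 2 - k * CA k n + k) / CA k n by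
        field_simp; ring]
      exact div_pos h1 hx0
    rw [CA_rec k n hn]
    linarith
  refine ⟨pos, dec, key, ?_⟩
  -- convergence
  set g : ℕ → ℝ := fun n => CA k (n + 1) with hg
  have gdec : Antitone g := antitone_nat_of_succ_le fun n =>
    (dec (n + 1) (by omega)).le
  have gbdd : BddBelow (Set.range g) := ⟨L, by rintro _ ⟨n, rfl⟩; exact (key (n+1) (by omega)).le⟩
  have htend : Filter.Tendsto g Filter.atTop (nhds (⨅ n, g n)) :=
    tendsto_atTop_ciInf gdec gbdd
  set c := ⨅ n, g n with hc
  have hcL : L ≤ c := le_ciInf fun n => (key (n+1) (by omega)).le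
  have hc0 : c ≠ 0 := ne_of_gt (hLpos.trans_le hcL)
  have hshift : Filter.Tendsto (fun n => g (n + 1)) Filter.atTop (nhds c) :=
    (Filter.tendsto_add_atTop_iff_nat 1).mpr htend
  have hrec : ∀ n, g (n + 1) = k - k / g n := fun n => CA_rec k (n + 1) (by omega)
  have htend2 : Filter.Tendsto (fun n => k - k / g n) Filter.atTop (nhds (k - k / c)) :=
    Filter.Tendsto.sub tendsto_const_nhds (Filter.Tendsto.div tendsto_const_nhds htend hc0)
  have heq : c = k - k / c := by
    apply tendsto_nhds_unique hshift
    simpa [hrec] using htend2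
  have hc0' : (0:ℝ) < c := hLpos.trans_le hcL
  have hceq : c ^ 2 - k * c + k = 0 := by
    field_simp at heq
    nlinarith [heq]
  have hcL' : c = L := by
    nlinarith [sq_nonneg (c - L), mul_nonneg (sub_nonneg.mpr hcL) (show (0:ℝ) ≤ 2 * L - k by linarith)]
  have hfin : Filter.Tendsto g Filter.atTop (nhds L) := hcL' ▸ htend
  exact (Filter.tendsto_add_atTop_iff_nat 1).mp hfin
end

section
/- Let k be a real number with 0 < k < 4. Then there is no sequence (x_n)_{n≥1} of positive real numbers satisfying x_{n+1} = k − k/x_n for all n ≥ 1. Consequently, for 0 < k < 4 the recursion C_{n+1}^A(k) = k − k/C_n^A(k) starting from C_1^A(k) = k cannot be continued indefinitely with all terms positive. -/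
lemma no_positive_chainA_aux (k : ℝ) (hk0 : 0 < k) (hk4 : k < 4) :
    ¬ ∃ x : ℕ → ℝ, (∀ n : ℕ, 1 ≤ n → 0 < x n) ∧
        (∀ n : ℕ, 1 ≤ n → x (n + 1) = k - k / x n) := by
  rintro ⟨x, hpos, hrec⟩
  -- every term exceeds 1
  have h1 : ∀ n : ℕ, 1 ≤ n → 1 < x n := by
    intro n hn
    have hx := hpos n hn
    have hx1 := hpos (n + 1) (by omega)
    rw [hrec n hn] at hx1
    by_contra h
    push_neg at h
    have hkx : k ≤ k / x n := by
      rw [le_div_iff₀ hx]; nlinarith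
    linarith
  -- one-step decrease by (k - k^2/4)/x n
  have hstep : ∀ n : ℕ, 1 ≤ n → x (n + 1) ≤ x n - (k - k ^ 2 / 4) / x n := by
    intro n hn
    have hx := hpos n hn
    rw [hrec n hn]
    have h2 : k / x n * x n = k := div_mul_cancel₀ k (ne_of_gt hx)
    have h3 : (k - k ^ 2 / 4) / x n * x n = k - k ^ 2 / 4 :=
      div_mul_cancel₀ _ (ne_of_gt hx)
    rw [← sub_nonneg]
    have expand : x n - (k - k ^ 2 / 4) / x n - (k - k / x n)
        = (x n - k / 2) ^ 2 / x n := by field_simp; ring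
    rw [expand]; positivity
  have hM : 0 < x 1 := hpos 1 le_rfl
  -- bounded above by x 1
  have hle : ∀ n : ℕ, 1 ≤ n → x n ≤ x 1 := by
    intro n
    induction n with
    | zero => intro h; omega
    | succ m ih =>
      intro _
      by_cases hm : 1 ≤ m
      case neg =>
        have : m = 0 := by omega
        subst this; exact le_rfl
      case pos =>
        have := hstep m hm
        have hxm := hpos m hm
        have hd : 0 < (k - k ^ 2 / 4) / x m := by
          apply div_pos _ hxm; nlinarith
        have := ih hm
        linarith
  set ε := (k - k ^ 2 / 4) / x 1 with hε
  have hεpos : 0 < ε := by apply div_pos _ hM; nlinarith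
  -- uniform step decrease
  have hstep' : ∀ n : ℕ, 1 ≤ n → x (n + 1) ≤ x n - ε := by
    intro n hn
    have hx := hpos n hn
    have hxle := hle n hn
    have : ε ≤ (k - k ^ 2 / 4) / x n := by
      apply div_le_div_of_nonneg_left _ hx hxle
      nlinarith
    have := hstep n hn
    linarith
  -- iterate
  have hiter : ∀ m : ℕ, x (1 + m) ≤ x 1 - m * ε := by
    intro m
    induction m with
    | zero => simp
    | succ p ih =>
      have h := hstep' (1 + p) (by omega)
      have : x (1 + (p + 1)) = x ((1 + p) + 1) := by ring_nf
      rw [this]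
      push_cast
      calc x ((1 + p) + 1) ≤ x (1 + p) - ε := h
        _ ≤ x 1 - p * ε - ε := by linarith
        _ = x 1 - (p + 1) * ε := by ring
  obtain ⟨m, hm⟩ := exists_nat_gt ((x 1 - 1) / ε)
  have hmε : x 1 - 1 < m * ε := by
    rw [div_lt_iff₀ hεpos] at hm; linarith
  have := hiter m
  have := h1 (1 + m) (by omega)
  linarith

/-- For `0 < k < 4` there is no sequence `(x_n)_{n≥1}` of positive
reals with `x_{n+1} = k − k/x_n` for all `n ≥ 1`; hence the recursion
`C_{n+1}^A(k) = k − k/C_n^A(k)` starting from `C_1^A(k) = k` cannot be continued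
indefinitely with all terms positive. -/
theorem no_positive_chainA_of_lt_four (k : ℝ) (hk0 : 0 < k) (hk4 : k < 4) :
    (¬ ∃ x : ℕ → ℝ, (∀ n : ℕ, 1 ≤ n → 0 < x n) ∧
        (∀ n : ℕ, 1 ≤ n → x (n + 1) = k - k / x n)) ∧
    (¬ ∃ x : ℕ → ℝ, x 1 = k ∧ (∀ n : ℕ, 1 ≤ n → 0 < x n) ∧
        (∀ n : ℕ, 1 ≤ n → x (n + 1) = k - k / x n)) := by
  constructor
  · exact no_positive_chainA_aux k hk0 hk4
  · rintro ⟨x, _, hpos, hrec⟩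
    exact no_positive_chainA_aux k hk0 hk4 ⟨x, hpos, hrec⟩
end

section
/- Let k be a real number with 0 < k < 4. Then there is no sequence (x_n)_{n≥1} of real numbers satisfying 0 < x_n < k for all n ≥ 1 and x_{n+1} = k/(k − x_n) for all n ≥ 1. Consequently, for 0 < k < 4 the recursion C_{n+1}^B(k) = k/(k − C_n^B(k)) starting from C_1^B(k) = 1 cannot be continued indefinitely with all terms in (0, k). -/
/-- For `0 < k < 4` there is no sequence `(x_n)_{n≥1}` of reals with
`0 < x_n < k` and `x_{n+1} = k/(k − x_n)` for all `n ≥ 1`; hence the recursion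
`C_{n+1}^B(k) = k/(k − C_n^B(k))` starting from `C_1^B(k) = 1` cannot be continued
indefinitely with all terms in `(0, k)`. -/
theorem no_chainB_of_lt_four (k : ℝ) (hk0 : 0 < k) (hk4 : k < 4) :
    (¬ ∃ x : ℕ → ℝ, (∀ n : ℕ, 1 ≤ n → 0 < x n ∧ x n < k) ∧
        (∀ n : ℕ, 1 ≤ n → x (n + 1) = k / (k - x n))) ∧
    (¬ ∃ x : ℕ → ℝ, x 1 = 1 ∧ (∀ n : ℕ, 1 ≤ n → 0 < x n ∧ x n < k) ∧
        (∀ n : ℕ, 1 ≤ n → x (n + 1) = k / (k - x n))) := by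
  have main : ¬ ∃ x : ℕ → ℝ, (∀ n : ℕ, 1 ≤ n → 0 < x n ∧ x n < k) ∧
        (∀ n : ℕ, 1 ≤ n → x (n + 1) = k / (k - x n)) := by
    rintro ⟨x, hb, hr⟩
    set δ : ℝ := 1 - k / 4 with hδ
    have hδ0 : 0 < δ := by rw [hδ]; linarith
    have step : ∀ n, 1 ≤ n → x n + δ ≤ x (n + 1) := by
      intro n hn
      have hbn := hb n hn
      have hden : 0 < k - x n := by linarith [hbn.2]
      rw [hr n hn, le_div_iff₀ hden, hδ]
      nlinarith [sq_nonneg (x n - k / 2), hbn.1]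
    have grow : ∀ n : ℕ, x 1 + n * δ ≤ x (1 + n) := by
      intro n
      induction n with
      | zero => simp
      | succ m ih =>
        have h := step (1 + m) (by omega)
        have e : 1 + (m + 1) = (1 + m) + 1 := by omega
        rw [e]
        push_cast
        linarith
    obtain ⟨n, hn⟩ := exists_nat_gt (k / δ)
    have h1 := (hb 1 le_rfl).1
    have h2 := (hb (1 + n) (by omega)).2
    have hkn : k < (n : ℝ) * δ := by
      rw [div_lt_iff₀ hδ0] at hn; linarith
    have := grow n
    linarith
  refine ⟨main, ?_⟩
  rintro ⟨x, _, h1, h2⟩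
  exact main ⟨x, h1, h2⟩
end
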